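/- Let 0 < u < 1 and a ∈ [0,π]. Then ∫_{I_R} Log(1 − u·e^{it})·(e^{it} + e^{−it}) dt = 2·( −sin(a)·ln(1 + u² − 2u·cos a) + sin a − u·(π − a) − (1/u − u)·θ_u ), where the integral is over I_R = [−π,−a] ∪ [a,π] and θ_u = arctan(u·sin a/(1 − u·cos a)). (Identity I₂ used in the proof of Proposition 2.) -/

import Mathlib

open MeasureTheory Complex

/-! With `L t = Log (1 - u e^{it})`, integration by parts gives the primitive
`F t = 2 sin t · L t + i e^{it} + i (1/u - u) L t - u t` of `2 cos t · L t`: the last three terms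
integrate `-2 sin t · L' t`, a rational function of `e^{it}`. Since
`L t = ½ log (1 + u² - 2u cos t) - i θ_u(t)` with `θ_u` odd, `Re F` is odd and `Im F` is even,
so `F π - F a + F (-a) - F (-π) = 2 Re (F π - F a)`, which is read off at `t = a` and `t = π`. -/

theorem Complex.arg_eq_arctan_of_re_pos {z : ℂ} (hz : 0 < z.re) :
    arg z = Real.arctan (z.im / z.re) := by
  rw [← tan_arg, Real.arctan_tan (neg_pi_div_two_lt_arg_iff.2 (Or.inl hz))
    (arg_lt_pi_div_two_iff.2 (Or.inl hz))]

theorem Complex.log_eq_of_re_pos {z : ℂ} (hz : 0 < z.re) :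
    log z = (Real.log (normSq z) / 2 : ℝ) + (Real.arctan (z.im / z.re) : ℝ) * I := by
  rw [← re_add_im (log z), log_re, log_im, arg_eq_arctan_of_re_pos hz, norm_def,
    Real.log_sqrt (normSq_nonneg z)]

theorem re_one_sub_mul_exp_I_mul (u t : ℝ) :
    (1 - u * exp (I * t)).re = 1 - u * Real.cos t := by
  simp [mul_comm I, exp_ofReal_mul_I, cos_ofReal_re]

theorem im_one_sub_mul_exp_I_mul (u t : ℝ) :
    (1 - u * exp (I * t)).im = -(u * Real.sin t) := by
  simp [mul_comm I, exp_ofReal_mul_I, sin_ofReal_re]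

theorem re_one_sub_mul_exp_I_mul_pos {u : ℝ} (hu : |u| < 1) (t : ℝ) :
    0 < (1 - u * exp (I * t)).re := by
  have : |u * Real.cos t| < 1 := by
    rw [abs_mul]
    nlinarith [abs_nonneg u, Real.abs_cos_le_one t, abs_nonneg (Real.cos t)]
  rw [re_one_sub_mul_exp_I_mul]
  linarith [le_abs_self (u * Real.cos t)]

noncomputable def theta (c a : ℝ) : ℝ := Real.arctan (c * Real.sin a / (1 - c * Real.cos a))

theorem theta_neg (c a : ℝ) : theta c (-a) = -theta c a := by
  rw [theta, theta, Real.sin_neg, Real.cos_neg, mul_neg, neg_div, Real.arctan_neg]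

theorem theta_pi (c : ℝ) : theta c Real.pi = 0 := by
  simp [theta]

theorem log_one_sub_mul_exp_I_mul {u : ℝ} (hu : |u| < 1) (t : ℝ) :
    log (1 - u * exp (I * t)) = (Real.log (1 + u ^ 2 - 2 * u * Real.cos t) / 2 : ℝ)
      - theta u t * I := by
  have hnormSq : normSq (1 - u * exp (I * t)) = 1 + u ^ 2 - 2 * u * Real.cos t := by
    rw [normSq_apply, re_one_sub_mul_exp_I_mul, im_one_sub_mul_exp_I_mul]
    linear_combination u ^ 2 * Real.sin_sq_add_cos_sq t
  rw [log_eq_of_re_pos (re_one_sub_mul_exp_I_mul_pos hu t), hnormSq,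
    re_one_sub_mul_exp_I_mul, im_one_sub_mul_exp_I_mul, neg_div, Real.arctan_neg, theta]
  push_cast
  ring

theorem integral_Icc_union_Icc {E : Type*} [NormedAddCommGroup E] [NormedSpace ℝ E]
    {f : ℝ → E} {a b c d : ℝ} (hab : a ≤ b) (hbc : b ≤ c) (hcd : c ≤ d)
    (hf₁ : IntegrableOn f (Set.Icc a b)) (hf₂ : IntegrableOn f (Set.Icc c d)) :
    ∫ t in Set.Icc a b ∪ Set.Icc c d, f t = (∫ t in a..b, f t) + ∫ t in c..d, f t := by
  have hnull : volume (Set.Icc a b ∩ Set.Icc c d) = 0 :=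
    measure_mono_null (t := Set.Icc c b) (fun _ hx => ⟨hx.2.1, hx.1.2⟩)
      (by rw [Real.volume_Icc, ENNReal.ofReal_eq_zero]; linarith)
  rw [setIntegral_union₀ hnull measurableSet_Icc.nullMeasurableSet hf₁ hf₂,
    intervalIntegral.integral_of_le hab, intervalIntegral.integral_of_le hcd,
    integral_Icc_eq_integral_Ioc, integral_Icc_eq_integral_Ioc]

theorem hasDerivAt_cexp_const_mul_ofReal (c : ℂ) (t : ℝ) :
    HasDerivAt (fun t : ℝ => exp (c * t)) (c * exp (c * t)) t := by
  simpa [mul_comm] using (((hasDerivAt_id (t : ℂ)).const_mul c).cexp).comp_ofReal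

theorem hasDerivAt_log_one_sub_mul_exp_I_mul {u : ℝ} (hu : |u| < 1) (t : ℝ) :
    HasDerivAt (fun t : ℝ => log (1 - u * exp (I * t)))
      (-(u * (I * exp (I * t))) / (1 - u * exp (I * t))) t :=
  (((hasDerivAt_cexp_const_mul_ofReal I t).const_mul (u : ℂ)).const_sub 1).clog_real
    (mem_slitPlane_iff.2 (Or.inl (re_one_sub_mul_exp_I_mul_pos hu t)))

theorem continuous_log_one_sub_mul_exp_I_mul {u : ℝ} (hu : |u| < 1) :
    Continuous fun t : ℝ => log (1 - u * exp (I * t)) :=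
  continuous_iff_continuousAt.2 fun t => (hasDerivAt_log_one_sub_mul_exp_I_mul hu t).continuousAt

-- `I * (exp (-I * t) - exp (I * t)) = 2 * sin t`
noncomputable def logTwoCosPrimitive (u t : ℝ) : ℂ :=
  I * (exp (-I * t) - exp (I * t)) * log (1 - u * exp (I * t)) + I * exp (I * t)
    + I * (1 / u - u) * log (1 - u * exp (I * t)) - u * t

theorem hasDerivAt_logTwoCosPrimitive {u : ℝ} (hu0 : u ≠ 0) (hu : |u| < 1) (t : ℝ) :
    HasDerivAt (logTwoCosPrimitive u)
      (log (1 - u * exp (I * t)) * (exp (I * t) + exp (-I * t))) t := by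
  have hE := hasDerivAt_cexp_const_mul_ofReal I t
  have hE' := hasDerivAt_cexp_const_mul_ofReal (-I) t
  have hL := hasDerivAt_log_one_sub_mul_exp_I_mul hu t
  have hid : HasDerivAt (fun t : ℝ => (t : ℂ)) 1 t := (hasDerivAt_id (t : ℂ)).comp_ofReal
  refine ((((hE'.sub hE).const_mul I).mul hL).add (hE.const_mul I)
    |>.add (hL.const_mul (I * (1 / u - u))) |>.sub (hid.const_mul (u : ℂ))).congr_deriv ?_
  have hne := slitPlane_ne_zero (mem_slitPlane_iff.2 (Or.inl (re_one_sub_mul_exp_I_mul_pos hu t)))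
  have hu0' : (u : ℂ) ≠ 0 := ofReal_ne_zero.2 hu0
  simp only [Pi.sub_apply, neg_mul I, exp_neg]
  have hE0 := exp_ne_zero (I * t)
  set E := exp (I * t)
  rw [mul_comm (u : ℂ) E] at hne ⊢
  field_simp
  rw [I_sq]
  ring

theorem logTwoCosPrimitive_eq {u : ℝ} (hu : |u| < 1) (t : ℝ) :
    logTwoCosPrimitive u t =
      ((Real.sin t * Real.log (1 + u ^ 2 - 2 * u * Real.cos t) - Real.sin t
          + (1 / u - u) * theta u t - u * t : ℝ) : ℂ)
        + ((Real.cos t + (1 / u - u) * (Real.log (1 + u ^ 2 - 2 * u * Real.cos t) / 2)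
          - 2 * Real.sin t * theta u t : ℝ) : ℂ) * I := by
  have hexp : exp (I * t) = Real.cos t + Real.sin t * I := by rw [mul_comm, exp_ofReal_mul_I]
  have hexp' : exp (-I * t) = Real.cos t - Real.sin t * I := by
    rw [show -I * t = ((-t : ℝ) : ℂ) * I by push_cast; ring, exp_ofReal_mul_I, Real.cos_neg,
      Real.sin_neg]
    push_cast; ring
  rw [logTwoCosPrimitive, log_one_sub_mul_exp_I_mul hu, hexp, hexp']
  push_cast
  ring_nf
  rw [I_sq, I_pow_three]
  ring

/-- Identity `I₂` used in the proof of Proposition 2: for `0 < u < 1` and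
`a ∈ [0,π]`, the integral of `Log(1 − u e^{it})(e^{it} + e^{−it})` over
`I_R = [−π,−a] ∪ [a,π]` equals
`2(−sin a · ln(1 + u² − 2u cos a) + sin a − u(π − a) − (1/u − u) θ_u)` with
`θ_u = arctan(u sin a / (1 − u cos a))`. -/
theorem integral_log_times_two_cos
    (u a : ℝ) (hu0 : 0 < u) (hu1 : u < 1) (ha : a ∈ Set.Icc 0 Real.pi) :
    ∫ t in (Set.Icc (-Real.pi) (-a) ∪ Set.Icc a Real.pi),
        Complex.log (1 - (u : ℂ) * Complex.exp (Complex.I * (t : ℝ)))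
          * (Complex.exp (Complex.I * (t : ℝ)) + Complex.exp (-Complex.I * (t : ℝ)))
      = ((2 * (-Real.sin a * Real.log (1 + u ^ 2 - 2 * u * Real.cos a)
          + Real.sin a - u * (Real.pi - a)
          - (1 / u - u) * Real.arctan (u * Real.sin a / (1 - u * Real.cos a))) : ℝ) : ℂ) := by
  obtain ⟨ha0, haπ⟩ := ha
  have hu : |u| < 1 := abs_lt.2 ⟨by linarith, hu1⟩
  have hcont : Continuous fun t : ℝ => log (1 - u * exp (I * t)) * (exp (I * t) + exp (-I * t)) :=
    (continuous_log_one_sub_mul_exp_I_mul hu).mul (by fun_prop)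
  have hFTC (b c : ℝ) := intervalIntegral.integral_eq_sub_of_hasDerivAt
    (fun t _ => hasDerivAt_logTwoCosPrimitive hu0.ne' hu t) (hcont.intervalIntegrable b c)
  rw [integral_Icc_union_Icc (by linarith) (by linarith) haπ hcont.integrableOn_Icc
    hcont.integrableOn_Icc, hFTC, hFTC]
  simp only [logTwoCosPrimitive_eq hu, Real.sin_neg, Real.cos_neg, theta_neg, Real.sin_pi,
    Real.cos_pi, theta_pi]
  rw [← theta]
  push_cast
  ring
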